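/- arXiv:2303.17868 — 2 statements merged into one kernel-verified Lean document; each statement's English description precedes it below -/
import Mathlib

section
/- Assume g is regular, i.e. the adjoint map g♯ : P → Hom_A(P,Q), g♯(p₁)(p₂) := g(p₁,p₂), is an isomorphism of A-modules. Then the sequence 0 → Hom_A(P,Q) → D(T)₁ → Der_K(A, Hom_A(P,Q)) is exact, where: the first map sends an A-linear map φ : P → Q to the degree-1 derivation of T with components X^A = 0 and X^P = φ (this is a well-defined injective map); and the second map sends a degree-1 derivation X with components (X^A, X^P) to the Hom_A(P,Q)-valued derivation g♯ ∘ X^A of A. In particular, a degree-1 derivation X of T lies in the kernel of the second map if and only if X^A = 0, if and only if X^P is A-linear, so this kernel is isomorphic to Hom_A(P,Q) as an A-module. -/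
variable {K A P Q : Type*}
variable [Field K] [CharZero K] [CommRing A] [Algebra K A]
variable [AddCommGroup P] [Module A P] [AddCommGroup Q] [Module A Q]
variable [Module K P] [Module K Q] [IsScalarTower K A P] [IsScalarTower K A Q]

/-- Multiplication of the triole algebra `T = A ⊕ P ⊕ Q` determined by the
`A`-bilinear form `g : P × P → Q`. -/
def trioleMul (g : P →ₗ[A] P →ₗ[A] Q) (x y : A × P × Q) : A × P × Q :=
  (x.1 * y.1,
    x.1 • y.2.1 + y.1 • x.2.1,
    x.1 • y.2.2 + y.1 • x.2.2 + g x.2.1 y.2.1)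

/-- `X : T → T` is a derivation of degree `k` of the triole algebra: the graded
Leibniz rule `X (s t) = X s · t + (-1)^(k·i) s · X t` holds for all homogeneous
`s ∈ Tᵢ` (for `i = 0, 1, 2`; the homogeneous components of all other degrees are zero,
where the Leibniz rule holds trivially) and all `t ∈ T`. -/
def IsTrioleDeriv (g : P →ₗ[A] P →ₗ[A] Q) (k : ℤ)
    (X : (A × P × Q) →ₗ[K] (A × P × Q)) : Prop :=
  (∀ (a : A) (t : A × P × Q),
    X (trioleMul g (a, 0, 0) t)
      = trioleMul g (X (a, 0, 0)) t + trioleMul g (a, 0, 0) (X t)) ∧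
  (∀ (p : P) (t : A × P × Q),
    X (trioleMul g (0, p, 0) t)
      = trioleMul g (X (0, p, 0)) t + ((-1 : K) ^ k) • trioleMul g (0, p, 0) (X t)) ∧
  (∀ (q : Q) (t : A × P × Q),
    X (trioleMul g (0, 0, q) t)
      = trioleMul g (X (0, 0, q)) t + trioleMul g (0, 0, q) (X t))


/-- The degree-1 `K`-linear map `T → T` with components `X^A : A → P`, `X^P : P → Q`. -/
def deg1Map (XA : A →ₗ[K] P) (XP : P →ₗ[K] Q) : (A × P × Q) →ₗ[K] (A × P × Q) :=
  LinearMap.prod 0 (LinearMap.prod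
    (XA ∘ₗ LinearMap.fst K A (P × Q))
    (XP ∘ₗ (LinearMap.fst K P Q ∘ₗ LinearMap.snd K A (P × Q))))

/-- `X` has degree `1`: it shifts the homogeneous components of `T = A ⊕ P ⊕ Q` by one. -/
def IsDegOneMap (X : (A × P × Q) →ₗ[K] (A × P × Q)) : Prop :=
  (∀ a : A, (X (a, 0, 0)).1 = 0 ∧ (X (a, 0, 0)).2.2 = 0) ∧
  (∀ p : P, (X (0, p, 0)).1 = 0 ∧ (X (0, p, 0)).2.1 = 0) ∧
  (∀ q : Q, X (0, 0, q) = 0)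

/-!
The Leibniz rule for `s = a ∈ A` gives, on `t = b ∈ A`, that `X^A` is a `P`-valued derivation of
`A`, and on `t = p ∈ P` that `X^P (a • p) = g (X^A a) p + a • X^P p`. Hence `X^P` is `A`-linear
iff `g♯ ∘ X^A = 0`, which for injective `g♯` means `X^A = 0`; and a degree-one map with `X^A = 0`
and `A`-linear `X^P` is the image of `X^P ∈ Hom_A(P,Q)`.
-/

@[simp]
lemma deg1Map_apply (XA : A →ₗ[K] P) (XP : P →ₗ[K] Q) (t : A × P × Q) :
    deg1Map XA XP t = (0, XA t.1, XP t.2.1) := rfl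

lemma deg1Map_inj {XA XA' : A →ₗ[K] P} {XP XP' : P →ₗ[K] Q} :
    deg1Map XA XP = deg1Map XA' XP' ↔ XA = XA' ∧ XP = XP' := by
  refine ⟨fun h => ⟨?_, ?_⟩, fun ⟨hA, hP⟩ => hA ▸ hP ▸ rfl⟩
  · exact LinearMap.ext fun a => congr_arg (fun X => (X (a, 0, 0)).2.1) h
  · exact LinearMap.ext fun p => congr_arg (fun X => (X (0, p, 0)).2.2) h

lemma isTrioleDeriv_deg1Map_zero (g : P →ₗ[A] P →ₗ[A] Q) (k : ℤ) (φ : P →ₗ[A] Q) :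
    IsTrioleDeriv g k (deg1Map 0 (φ.restrictScalars K)) := by
  refine ⟨?_, ?_, ?_⟩ <;> intro x t <;> simp [trioleMul, mul_comm]

/-- The component `X^A : A → P` of a degree-one map `X`. -/
def deg1CompA (X : (A × P × Q) →ₗ[K] (A × P × Q)) : A →ₗ[K] P :=
  LinearMap.fst K P Q ∘ₗ LinearMap.snd K A (P × Q) ∘ₗ X ∘ₗ LinearMap.inl K A (P × Q)

/-- The component `X^P : P → Q` of a degree-one map `X`. -/
def deg1CompP (X : (A × P × Q) →ₗ[K] (A × P × Q)) : P →ₗ[K] Q :=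
  LinearMap.snd K P Q ∘ₗ LinearMap.snd K A (P × Q) ∘ₗ X ∘ₗ LinearMap.inr K A (P × Q) ∘ₗ
    LinearMap.inl K P Q

@[simp]
lemma deg1CompA_apply (X : (A × P × Q) →ₗ[K] (A × P × Q)) (a : A) :
    deg1CompA X a = (X (a, 0, 0)).2.1 := rfl

@[simp]
lemma deg1CompP_apply (X : (A × P × Q) →ₗ[K] (A × P × Q)) (p : P) :
    deg1CompP X p = (X (0, p, 0)).2.2 := rfl

namespace IsDegOneMap

variable {X : (A × P × Q) →ₗ[K] (A × P × Q)}

lemma eq_deg1Map (hX : IsDegOneMap X) : X = deg1Map (deg1CompA X) (deg1CompP X) := by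
  refine LinearMap.ext fun ⟨a, p, q⟩ => ?_
  have hsplit : ((a, p, q) : A × P × Q) = (a, 0, 0) + (0, p, 0) + (0, 0, q) := by simp
  rw [hsplit, map_add, map_add, hX.2.2 q]
  ext <;> simp [(hX.1 a).1, (hX.1 a).2, (hX.2.1 p).1, (hX.2.1 p).2]

lemma exists_eq_deg1Map_iff (hX : IsDegOneMap X) :
    (∃ φ : P →ₗ[A] Q, X = deg1Map 0 (φ.restrictScalars K)) ↔
      (∀ a : A, deg1CompA X a = 0) ∧ ∀ (a : A) (p : P), deg1CompP X (a • p) = a • deg1CompP X p := by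
  constructor
  · rintro ⟨φ, rfl⟩
    simp
  · rintro ⟨hA, hP⟩
    refine ⟨{ deg1CompP X with map_smul' := hP }, ?_⟩
    refine hX.eq_deg1Map.trans ?_
    rw [(LinearMap.ext hA : deg1CompA X = 0)]
    rfl

end IsDegOneMap

namespace IsTrioleDeriv

variable {g : P →ₗ[A] P →ₗ[A] Q} {k : ℤ} {X : (A × P × Q) →ₗ[K] (A × P × Q)}

lemma deg1CompA_mul (hder : IsTrioleDeriv g k X) (a b : A) :
    deg1CompA X (a * b) = b • deg1CompA X a + a • deg1CompA X b := by
  simpa [trioleMul] using congr_arg (fun t : A × P × Q => t.2.1) (hder.1 a (b, 0, 0))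

lemma deg1CompP_smul (hder : IsTrioleDeriv g k X) (hX : IsDegOneMap X) (a : A) (p : P) :
    deg1CompP X (a • p) = g (deg1CompA X a) p + a • deg1CompP X p := by
  simpa [trioleMul, (hX.1 a).1, (hX.1 a).2, (hX.2.1 p).1, (hX.2.1 p).2] using
    congr_arg (fun t : A × P × Q => t.2.2) (hder.1 a (0, p, 0))

lemma deg1CompA_eq_zero_iff (hder : IsTrioleDeriv g k X) (hX : IsDegOneMap X)
    (hg : Function.Injective g) :
    (∀ a : A, deg1CompA X a = 0) ↔
      ∀ (a : A) (p : P), deg1CompP X (a • p) = a • deg1CompP X p := by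
  simp only [hder.deg1CompP_smul hX, add_eq_right]
  refine forall_congr' fun a => ?_
  rw [← g.map_eq_zero_iff hg, LinearMap.ext_iff]
  rfl

end IsTrioleDeriv

/-- for regular `g`, the sequence
`0 → Hom_A(P,Q) → D(T)₁ → Der_K(A, Hom_A(P,Q))` is exact. -/
theorem triolic_atiyah_sequence_degree_one (g : P →ₗ[A] P →ₗ[A] Q)
    (hreg : Function.Bijective fun p : P => (g p : P →ₗ[A] Q)) :
    -- the first map `Hom_A(P,Q) → D(T)₁` is well defined:
    (∀ φ : P →ₗ[A] Q, IsTrioleDeriv g 1 (deg1Map 0 (φ.restrictScalars K))) ∧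
    -- and injective:
    (∀ φ φ' : P →ₗ[A] Q,
      deg1Map (0 : A →ₗ[K] P) (φ.restrictScalars K)
        = deg1Map (0 : A →ₗ[K] P) (φ'.restrictScalars K) → φ = φ') ∧
    -- the second map is well defined: `g♯ ∘ X^A` is a `Hom_A(P,Q)`-valued derivation of `A`:
    (∀ X : (A × P × Q) →ₗ[K] (A × P × Q), IsDegOneMap X → IsTrioleDeriv g 1 X →
      ∀ a b : A,
        g ((X (a * b, 0, 0)).2.1)
          = a • g ((X (b, 0, 0)).2.1) + b • g ((X (a, 0, 0)).2.1)) ∧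
    -- exactness: for a degree-1 derivation `X`,
    -- `X` is in the kernel of the second map iff `X^A = 0`,
    (∀ X : (A × P × Q) →ₗ[K] (A × P × Q), IsDegOneMap X → IsTrioleDeriv g 1 X →
      (((∀ a : A, g ((X (a, 0, 0)).2.1) = 0) ↔ (∀ a : A, (X (a, 0, 0)).2.1 = 0)) ∧
      -- iff `X^P` is `A`-linear,
      ((∀ a : A, (X (a, 0, 0)).2.1 = 0) ↔
        (∀ (a : A) (p : P), (X (0, a • p, 0)).2.2 = a • (X (0, p, 0)).2.2)) ∧
      -- iff `X` lies in the image of the first map, i.e. the kernel is `Hom_A(P,Q)`: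
      ((∀ a : A, (X (a, 0, 0)).2.1 = 0) ↔
        ∃ φ : P →ₗ[A] Q, X = deg1Map 0 (φ.restrictScalars K)))) := by
  have hg : Function.Injective g := hreg.injective
  refine ⟨isTrioleDeriv_deg1Map_zero g 1, fun φ φ' h => ?_, fun X _ hder a b => ?_,
    fun X hX hder => ⟨?_, hder.deg1CompA_eq_zero_iff hX hg, ?_⟩⟩
  · exact LinearMap.restrictScalars_injective K (deg1Map_inj.mp h).2
  · show g (deg1CompA X (a * b)) = a • g (deg1CompA X b) + b • g (deg1CompA X a)
    rw [hder.deg1CompA_mul, map_add, map_smul, map_smul, add_comm]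
  · exact forall_congr' fun a => g.map_eq_zero_iff hg
  · rw [hX.exists_eq_deg1Map_iff, ← hder.deg1CompA_eq_zero_iff hX hg, and_self]
    rfl
end

section
/- Let {·,·} be a Poisson bracket of degree −1 on the triole algebra T, i.e. a K-bilinear skew-symmetric map with {T_i,T_j} ⊆ T_{i+j−1}, satisfying the Leibniz rule {x,yz} = {x,y}z + y{x,z} and the Jacobi identity {x,{y,z}} = {{x,y},z} + {y,{x,z}} for all x,y,z ∈ T. Then: (i) the restriction [p₁,p₂] := {p₁,p₂} makes P a Lie algebra over K; (ii) for each p ∈ P the map α(p) : A → A, a ↦ {p,a}, is a K-linear derivation of A, and α : P → Der_K(A) is A-linear; (iii) α is a morphism of Lie algebras: α([p₁,p₂]) = α(p₁)∘α(p₂) − α(p₂)∘α(p₁); (iv) [p₁, a·p₂] = α(p₁)(a)·p₂ + a·[p₁,p₂] for all a ∈ A, p₁,p₂ ∈ P (so (P,[·,·],α) is a Lie algebroid over A); and (v) for each p ∈ P the map Z_p : Q → Q, q ↦ {p,q}, satisfies Z_p(a·q) = α(p)(a)·q + a·Z_p(q) and Z_p(g(p₁,p₂)) = g([p,p₁],p₂)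 + g(p₁,[p,p₂]) for all a ∈ A, q ∈ Q, p₁,p₂ ∈ P. -/
variable {K A P Q : Type*}
variable [Field K] [CharZero K] [CommRing A] [Algebra K A]
variable [AddCommGroup P] [Module A P] [AddCommGroup Q] [Module A Q]
variable [Module K P] [Module K Q] [IsScalarTower K A P] [IsScalarTower K A Q]

/-- The bracket `[p₁,p₂] := {p₁,p₂} ∈ T₁ = P` of a degree-(-1) bracket on `T`. -/
def pBracket (B : (A × P × Q) →ₗ[K] (A × P × Q) →ₗ[K] (A × P × Q)) (p₁ p₂ : P) : P :=
  (B (0, p₁, 0) (0, p₂, 0)).2.1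

/-- The anchor `α(p)(a) := {p,a} ∈ T₀ = A` of a degree-(-1) bracket on `T`. -/
def pAnchor (B : (A × P × Q) →ₗ[K] (A × P × Q) →ₗ[K] (A × P × Q)) (p : P) (a : A) : A :=
  (B (0, p, 0) (a, 0, 0)).1

/-- The operator `Z_p(q) := {p,q} ∈ T₂ = Q` of a degree-(-1) bracket on `T`. -/
def pOnQ (B : (A × P × Q) →ₗ[K] (A × P × Q) →ₗ[K] (A × P × Q)) (p : P) (q : Q) : Q :=
  (B (0, p, 0) (0, 0, q)).2.2

/-- a degree-(-1) Poisson bracket on the triole algebra `T` makes `P` a Lie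
algebroid over `A` (with anchor `α(p) = {p,·}|_A`), and each `Z_p = {p,·}|_Q` is a
Der-operator in `Q` with symbol `α(p)` compatible with `g` via `[p,·]`. -/
theorem degree_neg_one_poisson_bracket (g : P →ₗ[A] P →ₗ[A] Q)
    (B : (A × P × Q) →ₗ[K] (A × P × Q) →ₗ[K] (A × P × Q))
    -- skew-symmetry:
    (hskew : ∀ x y : A × P × Q, B x y = - B y x)
    -- Leibniz rule:
    (hleib : ∀ x y z : A × P × Q,
      B x (trioleMul g y z) = trioleMul g (B x y) z + trioleMul g y (B x z))
    -- Jacobi identity: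
    (hjac : ∀ x y z : A × P × Q, B x (B y z) = B (B x y) z + B y (B x z))
    -- grading: `{T_i, T_j} ⊆ T_{i+j-1}`:
    (hAA : ∀ a a' : A, B (a, 0, 0) (a', 0, 0) = 0)
    (hAP : ∀ (a : A) (p : P),
      (B (a, 0, 0) (0, p, 0)).2.1 = 0 ∧ (B (a, 0, 0) (0, p, 0)).2.2 = 0)
    (hAQ : ∀ (a : A) (q : Q),
      (B (a, 0, 0) (0, 0, q)).1 = 0 ∧ (B (a, 0, 0) (0, 0, q)).2.2 = 0)
    (hPP : ∀ p p' : P,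
      (B (0, p, 0) (0, p', 0)).1 = 0 ∧ (B (0, p, 0) (0, p', 0)).2.2 = 0)
    (hPQ : ∀ (p : P) (q : Q),
      (B (0, p, 0) (0, 0, q)).1 = 0 ∧ (B (0, p, 0) (0, 0, q)).2.1 = 0)
    (hQQ : ∀ q q' : Q, B (0, 0, q) (0, 0, q') = 0) :
    -- (i) `[·,·]` makes `P` a Lie algebra over `K`:
    (∀ p₁ p₂ : P, pBracket B p₁ p₂ = - pBracket B p₂ p₁) ∧
    (∀ p₁ p₂ p₃ : P,
      pBracket B p₁ (pBracket B p₂ p₃)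
        = pBracket B (pBracket B p₁ p₂) p₃ + pBracket B p₂ (pBracket B p₁ p₃)) ∧
    -- (ii) each `α(p)` is a derivation of `A`, and `α` is `A`-linear:
    (∀ (p : P) (a b : A),
      pAnchor B p (a * b) = a * pAnchor B p b + b * pAnchor B p a) ∧
    (∀ (a : A) (p : P) (x : A), pAnchor B (a • p) x = a * pAnchor B p x) ∧
    -- (iii) `α` is a morphism of Lie algebras:
    (∀ (p₁ p₂ : P) (a : A),
      pAnchor B (pBracket B p₁ p₂) a
        = pAnchor B p₁ (pAnchor B p₂ a) - pAnchor B p₂ (pAnchor B p₁ a)) ∧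
    -- (iv) the Leibniz rule of a Lie algebroid:
    (∀ (a : A) (p₁ p₂ : P),
      pBracket B p₁ (a • p₂) = pAnchor B p₁ a • p₂ + a • pBracket B p₁ p₂) ∧
    -- (v) `Z_p` is a Der-operator in `Q` with symbol `α(p)`, compatible with `g`:
    (∀ (p : P) (a : A) (q : Q),
      pOnQ B p (a • q) = pAnchor B p a • q + a • pOnQ B p q) ∧
    (∀ p p₁ p₂ : P,
      pOnQ B p (g p₁ p₂)
        = g (pBracket B p p₁) p₂ + g p₁ (pBracket B p p₂)) := by

  classical
  -- values of `B` on pure homogeneous elements, as full triples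
  have BPP : ∀ p p' : P, B (0, p, 0) (0, p', 0) = (0, pBracket B p p', 0) := by
    intro p p'
    exact Prod.ext (hPP p p').1 (Prod.ext rfl (hPP p p').2)
  have BPA : ∀ (p : P) (a : A), B (0, p, 0) (a, 0, 0) = (pAnchor B p a, 0, 0) := by
    intro p a
    refine Prod.ext rfl (Prod.ext ?_ ?_)
    · rw [hskew (0, p, 0) (a, 0, 0)]
      simp only [Prod.snd_neg, Prod.fst_neg, (hAP a p).1, neg_zero]
    · rw [hskew (0, p, 0) (a, 0, 0)]
      simp only [Prod.snd_neg, Prod.snd_neg, (hAP a p).2, neg_zero]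
  have BAP : ∀ (a : A) (p : P), B (a, 0, 0) (0, p, 0) = (-(pAnchor B p a), 0, 0) := by
    intro a p
    rw [hskew (a, 0, 0) (0, p, 0), BPA p a]
    simp [Prod.neg_mk]
  have BPQ : ∀ (p : P) (q : Q), B (0, p, 0) (0, 0, q) = (0, 0, pOnQ B p q) := by
    intro p q
    exact Prod.ext (hPQ p q).1 (Prod.ext (hPQ p q).2 rfl)
  -- products of pure homogeneous elements
  have mulAA : ∀ a b : A, trioleMul g (a, 0, 0) (b, 0, 0) = (a * b, 0, 0) := by
    intro a b; simp [trioleMul]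
  have mulAP : ∀ (a : A) (p : P), trioleMul g (a, 0, 0) (0, p, 0) = (0, a • p, 0) := by
    intro a p; simp [trioleMul]
  have mulAQ : ∀ (a : A) (q : Q), trioleMul g (a, 0, 0) (0, 0, q) = (0, 0, a • q) := by
    intro a q; simp [trioleMul]
  have mulPP : ∀ p p' : P, trioleMul g (0, p, 0) (0, p', 0) = (0, 0, g p p') := by
    intro p p'; simp [trioleMul]
  have mulZero : ∀ t : A × P × Q, trioleMul g 0 t = 0 := by
    intro t; simp [trioleMul, Prod.ext_iff]
  refine ⟨?_, ?_, ?_, ?_, ?_, ?_, ?_, ?_⟩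
  · -- skew-symmetry of the bracket on P
    intro p₁ p₂
    simp [pBracket, hskew (0, p₁, 0) (0, p₂, 0)]
  · -- Jacobi identity on P
    intro p₁ p₂ p₃
    have h := hjac (0, p₁, 0) (0, p₂, 0) (0, p₃, 0)
    rw [BPP p₂ p₃, BPP p₁ p₂, BPP p₁ p₃] at h
    simpa [pBracket, Prod.fst_add, Prod.snd_add] using congrArg (fun t => t.2.1) h
  · -- α(p) is a derivation of A
    intro p a b
    have h := hleib (0, p, 0) (a, 0, 0) (b, 0, 0)
    rw [mulAA a b, BPA p a, BPA p b, mulAA (pAnchor B p a) b, mulAA a (pAnchor B p b)] at h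
    have h1 := congrArg (fun t => t.1) h
    simp only [Prod.fst_add] at h1
    calc pAnchor B p (a * b) = pAnchor B p a * b + a * pAnchor B p b := h1
    _ = a * pAnchor B p b + b * pAnchor B p a := by ring
  · -- α is A-linear
    intro a p x
    have h := hleib (x, 0, 0) (a, 0, 0) (0, p, 0)
    rw [mulAP a p, hAA x a, mulZero, BAP x p, mulAA a (-(pAnchor B p x))] at h
    have : pAnchor B (a • p) x = -(B (x, 0, 0) (0, a • p, 0)).1 := by
      show (B (0, a • p, 0) (x, 0, 0)).1 = _
      rw [hskew (0, a • p, 0) (x, 0, 0)]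
      rfl
    rw [this, h]
    simp only [Prod.fst_add, Prod.fst_zero]
    ring
  · -- α is a morphism of Lie algebras
    intro p₁ p₂ a
    have h := hjac (0, p₁, 0) (0, p₂, 0) (a, 0, 0)
    rw [BPA p₂ a, BPP p₁ p₂, BPA p₁ a] at h
    have h1 := congrArg (fun t => t.1) h
    simp only [Prod.fst_add] at h1
    have h2 : pAnchor B p₁ (pAnchor B p₂ a)
        = pAnchor B (pBracket B p₁ p₂) a + pAnchor B p₂ (pAnchor B p₁ a) := h1
    linear_combination -h2
  · -- algebroid Leibniz rule
    intro a p₁ p₂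
    have h := hleib (0, p₁, 0) (a, 0, 0) (0, p₂, 0)
    rw [mulAP a p₂, BPA p₁ a, BPP p₁ p₂, mulAP a (pBracket B p₁ p₂)] at h
    have h2 : trioleMul g (pAnchor B p₁ a, 0, 0) (0, p₂, 0)
        = (0, pAnchor B p₁ a • p₂, 0) := mulAP _ _
    rw [h2] at h
    simpa [pBracket, Prod.fst_add, Prod.snd_add] using congrArg (fun t => t.2.1) h
  · -- Z_p is a Der-operator with symbol α(p)
    intro p a q
    have h := hleib (0, p, 0) (a, 0, 0) (0, 0, q)
    rw [mulAQ a q, BPA p a, BPQ p q, mulAQ a (pOnQ B p q)] at h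
    have h2 : trioleMul g (pAnchor B p a, 0, 0) (0, 0, q)
        = (0, 0, pAnchor B p a • q) := mulAQ _ _
    rw [h2] at h
    simpa [pOnQ, Prod.fst_add, Prod.snd_add] using congrArg (fun t => t.2.2) h
  · -- compatibility of Z_p with g
    intro p p₁ p₂
    have h := hleib (0, p, 0) (0, p₁, 0) (0, p₂, 0)
    rw [mulPP p₁ p₂, BPP p p₁, BPP p p₂, mulPP (pBracket B p p₁) p₂,
      mulPP p₁ (pBracket B p p₂)] at h
    simpa [pOnQ, Prod.fst_add, Prod.snd_add] using congrArg (fun t => t.2.2) h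
end
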